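/- arXiv:1309.0906 — 5 statements merged into one kernel-verified Lean document; each statement's English description precedes it below -/
import Mathlib

section
/- Let r ≥ 3 be a prime and let x(m) = ln(I(m²))/ln(I(m)) with I(m) = σ(m)/m. If s and t are positive integers with s < t, then x(r^s) > x(r^t). -/
/-!
With `L k = log I(r^k)` we have `x(r^k) = L(2k) / L(k)`, where `L 0 = 0` and `L` is strictly
increasing. Passing from `k` to `k + 1` adds `L(k+1) - L(k)` to the denominator and
`L(2k+2) - L(2k)` to the numerator. The latter increment is the smaller one: in terms of `σ`
it says `σ(r^(2k+2)) σ(r^k) < r σ(r^(2k)) σ(r^(k+1))`, which follows from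
`σ(r^(j+1)) = r σ(r^j) + 1`. As the numerator already dominates the denominator, the quotient
drops.
-/

open ArithmeticFunction
open scoped ArithmeticFunction.sigma

noncomputable def abundancy (m : ℕ) : ℝ := (σ 1 m : ℝ) / m

lemma abundancy_pos {m : ℕ} (hm : 0 < m) : 0 < abundancy m := by
  unfold abundancy
  have : 0 < σ 1 m := sigma_pos_iff.mpr hm
  positivity

lemma div_lt_div_of_increment_lt {a b Δ d : ℝ} (hb : 0 < b) (hba : b ≤ a) (hd : 0 ≤ d)
    (hΔ : Δ < d) : (a + Δ) / (b + d) < a / b := by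
  rw [div_lt_div_iff₀ (by linarith) hb]
  nlinarith

lemma strictAntiOn_div_double {L : ℕ → ℝ} (hL : StrictMono L) (h0 : L 0 = 0)
    (hinc : ∀ k, 1 ≤ k → L (2 * (k + 1)) - L (2 * k) < L (k + 1) - L k) :
    StrictAntiOn (fun k => L (2 * k) / L k) (Set.Ici 1) := by
  refine strictAntiOn_Ici_of_lt_pred fun m hm => ?_
  obtain ⟨k, rfl⟩ : ∃ k, m = k + 1 := ⟨m - 1, by omega⟩
  have hk : 1 ≤ k := by omega
  have hpos : 0 < L k := h0 ▸ hL (by omega)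
  simpa using
    div_lt_div_of_increment_lt hpos (hL.monotone (by omega : k ≤ 2 * k))
      (sub_nonneg.mpr (hL.monotone k.le_succ)) (hinc k hk)

lemma log_abundancy_pow_add_sub {p : ℕ} (hp : p ≠ 0) (j n : ℕ) :
    Real.log (abundancy (p ^ (j + n))) - Real.log (abundancy (p ^ j)) =
      Real.log (σ 1 (p ^ (j + n)) / (p ^ n * σ 1 (p ^ j))) := by
  have hpj : 0 < p ^ j := by positivity
  have hpjn : 0 < p ^ (j + n) := by positivity
  rw [← Real.log_div (abundancy_pos hpjn).ne' (abundancy_pos hpj).ne']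
  have : (σ 1 (p ^ j) : ℝ) ≠ 0 := by exact_mod_cast (sigma_pos_iff.mpr hpj).ne'
  have : (p : ℝ) ≠ 0 := by exact_mod_cast hp
  congr 1
  unfold abundancy
  push_cast
  field_simp
  ring

namespace Nat.Prime

variable {p : ℕ}

lemma sigma_one_pow_succ (hp : p.Prime) (k : ℕ) :
    σ 1 (p ^ (k + 1)) = p * σ 1 (p ^ k) + 1 := by
  rw [sigma_one_apply_prime_pow hp, sigma_one_apply_prime_pow hp, Finset.sum_range_succ',
    Finset.mul_sum]
  simp [pow_succ']

lemma strictMono_sigma_one_pow (hp : p.Prime) : StrictMono fun k => σ 1 (p ^ k) :=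
  strictMono_nat_of_lt_succ fun k => by
    have := hp.two_le
    rw [hp.sigma_one_pow_succ k]
    nlinarith

-- The difference of the two sides is `p σ(p^(2k)) - (p + 1) σ(p^k)`, and
-- `σ(p^(2k)) ≥ σ(p^(k+1)) = p σ(p^k) + 1`.
lemma sigma_one_pow_mul_lt (hp : p.Prime) {k : ℕ} (hk : 1 ≤ k) :
    σ 1 (p ^ (2 * k + 2)) * σ 1 (p ^ k) < p * σ 1 (p ^ (2 * k)) * σ 1 (p ^ (k + 1)) := by
  have hp2 := hp.two_le
  have hle : σ 1 (p ^ (k + 1)) ≤ σ 1 (p ^ (2 * k)) :=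
    hp.strictMono_sigma_one_pow.monotone (by omega)
  rw [hp.sigma_one_pow_succ] at hle
  rw [hp.sigma_one_pow_succ, hp.sigma_one_pow_succ, hp.sigma_one_pow_succ]
  nlinarith

lemma strictMono_log_abundancy_pow (hp : p.Prime) :
    StrictMono fun k => Real.log (abundancy (p ^ k)) :=
  strictMono_nat_of_lt_succ fun k => by
    rw [← sub_pos, log_abundancy_pow_add_sub hp.ne_zero, pow_one]
    have hp0 : (0 : ℝ) < p := by exact_mod_cast hp.pos
    have hσ : (0 : ℝ) < σ 1 (p ^ k) := by exact_mod_cast sigma_pos_iff.mpr (pow_pos hp.pos k)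
    refine Real.log_pos ((one_lt_div (mul_pos hp0 hσ)).mpr ?_)
    rw [hp.sigma_one_pow_succ]
    push_cast
    linarith

lemma log_abundancy_pow_double_sub_lt (hp : p.Prime) {k : ℕ} (hk : 1 ≤ k) :
    Real.log (abundancy (p ^ (2 * (k + 1)))) - Real.log (abundancy (p ^ (2 * k))) <
      Real.log (abundancy (p ^ (k + 1))) - Real.log (abundancy (p ^ k)) := by
  rw [mul_add, mul_one, log_abundancy_pow_add_sub hp.ne_zero,
    log_abundancy_pow_add_sub hp.ne_zero]
  have hσ : ∀ j, (0 : ℝ) < σ 1 (p ^ j) := fun j => by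
    exact_mod_cast sigma_pos_iff.mpr (pow_pos hp.pos j)
  have hp0 : (0 : ℝ) < p := by exact_mod_cast hp.pos
  have key : (σ 1 (p ^ (2 * k + 2)) * σ 1 (p ^ k) : ℝ) <
      p * σ 1 (p ^ (2 * k)) * σ 1 (p ^ (k + 1)) := by
    exact_mod_cast hp.sigma_one_pow_mul_lt hk
  refine Real.log_lt_log (by have := hσ (2 * k + 2); have := hσ (2 * k); positivity) ?_
  rw [div_lt_div_iff₀ (by have := hσ (2 * k); positivity) (by have := hσ k; positivity)]
  nlinarith [mul_lt_mul_of_pos_left key hp0]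

end Nat.Prime

theorem stmt_5_general (r s t : ℕ) (hr : r.Prime)
    (hs : 0 < s) (hst : s < t)
    (x : ℕ → ℝ)
    (hx : ∀ m : ℕ, x m =
      Real.log ((ArithmeticFunction.sigma 1 (m ^ 2) : ℝ) / (m ^ 2 : ℕ)) /
        Real.log ((ArithmeticFunction.sigma 1 m : ℝ) / m)) :
    x (r ^ t) < x (r ^ s) := by
  have hx_pow : ∀ k,
      x (r ^ k) = Real.log (abundancy (r ^ (2 * k))) / Real.log (abundancy (r ^ k)) :=
    fun k => by rw [hx, ← pow_mul, mul_comm]; rfl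
  rw [hx_pow, hx_pow]
  exact strictAntiOn_div_double hr.strictMono_log_abundancy_pow (by simp [abundancy])
    (fun k hk => hr.log_abundancy_pow_double_sub_lt hk) (Set.mem_Ici.2 hs)
    (Set.mem_Ici.2 (by omega)) hst

theorem stmt_5 (r s t : ℕ) (hr : r.Prime) (hr3 : 3 ≤ r)
    (hs : 0 < s) (hst : s < t)
    (x : ℕ → ℝ)
    (hx : ∀ m : ℕ, x m =
      Real.log ((ArithmeticFunction.sigma 1 (m ^ 2) : ℝ) / (m ^ 2 : ℕ)) /
        Real.log ((ArithmeticFunction.sigma 1 m : ℝ) / m)) :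
    x (r ^ t) < x (r ^ s) :=
  stmt_5_general r s t hr hs hst x hx
end

section
/- If N = q^k · n² is an odd perfect number given in Eulerian form, then q < n·√3. -/
/-!
Multiplicativity gives `σ(q^k) σ(n²) = 2 q^k n²`. If `k ≥ 2`, then `σ(q^k)` is prime to `q`, so it
divides `2n²` and `q² ≤ q^k < 2n²`.

If `k = 1`, suppose `q² ≥ 3n²`. With `q + 1 = 2s` we get `n² = st` and `σ(n²) = qt`, and `q`
divides `σ(p^{2a}) = qc` for some prime power `p^a ∥ n`, say `n = p^a r`. Let `P = p^{v_p(s)}` and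
`B = p^{2a} / P`. Since `q ≡ -1 (mod P)`, reducing `qc = σ(p^{2a})` modulo `P` gives
`P ∣ c + (1 + p + ⋯ + p^{v_p(s) - 1})`, and that sum is below `P / 2`, so `P < 2c`. On the other
hand `2σ(p^{2a}) < 3p^{2a}`, `cB ∣ t` and `3t² < 4n²` combine to `c² < P`, and these two
inequalities are incompatible.
-/

open Finset ArithmeticFunction
open scoped ArithmeticFunction.sigma

lemma Nat.two_mul_geomSum_add_one_le {p : ℕ} (hp : 3 ≤ p) (e : ℕ) :
    2 * ∑ i ∈ range e, p ^ i + 1 ≤ p ^ e := by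
  obtain ⟨x, rfl⟩ : ∃ x, p = x + 1 := ⟨p - 1, by omega⟩
  rw [← geom_sum_mul_add x e, mul_comm]
  gcongr
  omega

namespace ArithmeticFunction

lemma two_mul_sigma_one_prime_pow_lt {p : ℕ} (hp : p.Prime) (hp3 : 3 ≤ p) (m : ℕ) :
    2 * σ 1 (p ^ m) < 3 * p ^ m := by
  have := Nat.two_mul_geomSum_add_one_le hp3 m
  rw [sigma_one_apply_prime_pow hp, sum_range_succ]
  omega

lemma sigma_one_prime_pow_modEq {p e m : ℕ} (hp : p.Prime) (he : e ≤ m + 1) :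
    σ 1 (p ^ m) ≡ ∑ i ∈ range e, p ^ i [MOD p ^ e] := by
  rw [sigma_one_apply_prime_pow hp, ← sum_range_add_sum_Ico _ he]
  have hdvd : p ^ e ∣ ∑ i ∈ Ico e (m + 1), p ^ i :=
    dvd_sum fun i hi ↦ pow_dvd_pow p (mem_Ico.mp hi).1
  simpa using (Nat.modEq_zero_iff_dvd.mpr hdvd).add_left (∑ i ∈ range e, p ^ i)

lemma coprime_sigma_one_prime_pow {p : ℕ} (hp : p.Prime) (m : ℕ) :
    Nat.Coprime p (σ 1 (p ^ m)) := by
  rw [hp.coprime_iff_not_dvd, (sigma_one_prime_pow_modEq hp (by omega : 1 ≤ m + 1)).dvd_iff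
    (by simp)]
  simpa using hp.one_lt.ne'

lemma prime_pow_add_one_le_two_mul {p q c e m : ℕ} (hp : p.Prime) (hp3 : 3 ≤ p)
    (he : e ≤ m + 1) (hq : p ^ e ∣ q + 1) (hc : σ 1 (p ^ m) = q * c) (hc0 : c ≠ 0) :
    p ^ e + 1 ≤ 2 * c := by
  have hmod : c + ∑ i ∈ range e, p ^ i ≡ (q + 1) * c [MOD p ^ e] := by
    rw [add_mul, one_mul, add_comm _ c, ← hc]
    exact ((sigma_one_prime_pow_modEq hp he).symm).add_left c
  have hdvd : p ^ e ∣ c + ∑ i ∈ range e, p ^ i :=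
    (hmod.dvd_iff dvd_rfl).mpr (dvd_mul_of_dvd_left hq c)
  have := Nat.le_of_dvd (by omega) hdvd
  have := Nat.two_mul_geomSum_add_one_le hp3 e
  omega

lemma exists_prime_dvd_of_dvd_sigma_one {q m : ℕ} (hq : q.Prime) (hm : m ≠ 0)
    (h : q ∣ σ 1 m) : ∃ p, p.Prime ∧ p ∣ m ∧ q ∣ σ 1 (p ^ m.factorization p) := by
  rw [isMultiplicative_sigma.multiplicative_factorization _ hm] at h
  obtain ⟨p, hp, hdvd⟩ := hq.prime.exists_mem_finset_dvd h
  rw [Nat.support_factorization] at hp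
  exact ⟨p, Nat.prime_of_mem_primeFactors hp, Nat.dvd_of_mem_primeFactors hp, hdvd⟩

lemma le_sigma_one (n : ℕ) : n ≤ σ 1 n := by
  rcases eq_or_ne n 0 with rfl | hn
  · simp
  · rw [sigma_one_apply]
    exact single_le_sum (f := id) (fun _ _ ↦ Nat.zero_le _) (Nat.mem_divisors_self n hn)

end ArithmeticFunction

lemma Nat.pow_factorization_sub_dvd {p s t : ℕ} (hs : s ≠ 0) (ht : t ≠ 0) :
    p ^ ((s * t).factorization p - s.factorization p) ∣ t := by
  rw [Nat.factorization_mul hs ht, Finsupp.add_apply, Nat.add_sub_cancel_left]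
  exact Nat.ordProj_dvd t p

lemma Nat.exists_eq_mul_and_eq_mul_of_mul_eq_mul {s q x y : ℕ} (hs : s ≠ 0)
    (hsq : Nat.Coprime s q) (h : s * x = q * y) : ∃ t, y = s * t ∧ x = q * t := by
  obtain ⟨t, rfl⟩ := hsq.dvd_of_dvd_mul_left ⟨x, h.symm⟩
  refine ⟨t, rfl, Nat.eq_of_mul_eq_mul_left (Nat.pos_of_ne_zero hs) ?_⟩
  rw [h]
  ring

lemma three_mul_sq_lt_four_mul_sq {n q s t : ℕ} (hn : n ≠ 0) (hst : n ^ 2 = s * t)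
    (hqs : q < 2 * s) (hq : 3 * n ^ 2 ≤ q ^ 2) : 3 * t ^ 2 < 4 * n ^ 2 := by
  have h : 3 * n ^ 2 < 4 * s ^ 2 := by nlinarith
  have ht : t ≠ 0 := by rintro rfl; simp_all
  have : n ^ 2 * (3 * t ^ 2) < n ^ 2 * (4 * n ^ 2) := by
    calc n ^ 2 * (3 * t ^ 2) = 3 * n ^ 2 * t ^ 2 := by ring
      _ < 4 * s ^ 2 * t ^ 2 := by gcongr
      _ = n ^ 2 * (4 * n ^ 2) := by rw [hst]; ring
  exact Nat.lt_of_mul_lt_mul_left this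

lemma sq_lt_of_three_mul_sq_le_sq {n q c r t P B : ℕ} (hn : n ^ 2 = P * B * r ^ 2)
    (hσ : 2 * (q * c) < 3 * (P * B)) (hq : 3 * n ^ 2 ≤ q ^ 2) (hcB : c * B ≤ t)
    (ht : 3 * t ^ 2 < 4 * n ^ 2) : c ^ 2 < P := by
  have h1 : 4 * (c ^ 2 * r ^ 2) < 3 * (P * B) := by
    refine Nat.lt_of_mul_lt_mul_left (a := 3 * (P * B)) ?_
    calc 3 * (P * B) * (4 * (c ^ 2 * r ^ 2)) = 4 * c ^ 2 * (3 * n ^ 2) := by rw [hn]; ring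
      _ ≤ 4 * c ^ 2 * q ^ 2 := by gcongr
      _ = (2 * (q * c)) ^ 2 := by ring
      _ < (3 * (P * B)) ^ 2 := by gcongr
      _ = 3 * (P * B) * (3 * (P * B)) := by ring
  have h2 : 3 * (c ^ 2 * B) < 4 * (P * r ^ 2) := by
    refine Nat.lt_of_mul_lt_mul_left (a := B) ?_
    calc B * (3 * (c ^ 2 * B)) = 3 * (c * B) ^ 2 := by ring
      _ ≤ 3 * t ^ 2 := by gcongr
      _ < 4 * n ^ 2 := ht
      _ = B * (4 * (P * r ^ 2)) := by rw [hn]; ring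
  have h4 : (c ^ 2) ^ 2 < P ^ 2 := by
    refine Nat.lt_of_mul_lt_mul_left (a := 12 * (B * r ^ 2)) ?_
    calc 12 * (B * r ^ 2) * (c ^ 2) ^ 2 = 3 * (c ^ 2 * B) * (4 * (c ^ 2 * r ^ 2)) := by ring
      _ < 4 * (P * r ^ 2) * (3 * (P * B)) := Nat.mul_lt_mul'' h2 h1
      _ = 12 * (B * r ^ 2) * P ^ 2 := by ring
  exact lt_of_pow_lt_pow_left₀ 2 (Nat.zero_le P) h4

lemma sq_lt_three_mul_sq_of_dvd_sigma_one_prime_pow {p q n a r s t c : ℕ} (hp : p.Prime)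
    (hp3 : 3 ≤ p) (hn : n = p ^ a * r) (hpr : ¬ p ∣ r) (hs : q + 1 = 2 * s) (hst : n ^ 2 = s * t)
    (hσ : σ 1 (n ^ 2) = q * t) (hc : σ 1 (p ^ (2 * a)) = q * c) : q ^ 2 < 3 * n ^ 2 := by
  by_contra! hqn
  have hn0 : n ≠ 0 := by rintro rfl; simp_all [hp.ne_zero]
  have hs0 : s ≠ 0 := by omega
  have ht0 : t ≠ 0 := by rintro rfl; simp_all
  have hn2 : n ^ 2 = p ^ (2 * a) * r ^ 2 := by rw [hn]; ring
  have hfac : (s * t).factorization p = 2 * a := by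
    rw [← hst, hn2, Nat.factorization_mul (by simp [hp.ne_zero]) (by simp_all),
      Nat.factorization_pow, Nat.factorization_pow]
    simp [hp.factorization_self, Nat.factorization_eq_zero_of_not_dvd hpr]
  have hct : c ∣ t := by
    have hsplit : σ 1 (n ^ 2) = σ 1 (p ^ (2 * a)) * σ 1 (r ^ 2) := by
      rw [hn2, isMultiplicative_sigma.map_mul_of_coprime
        (Nat.Coprime.pow _ _ (hp.coprime_iff_not_dvd.mpr hpr))]
    refine ⟨σ 1 (r ^ 2), Nat.eq_of_mul_eq_mul_left (by omega : 0 < q) ?_⟩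
    rw [← hσ, hsplit, hc, mul_assoc]
  set e := s.factorization p
  have he : e ≤ 2 * a := by
    rw [← hfac]
    exact (Nat.factorization_le_iff_dvd hs0 (mul_ne_zero hs0 ht0)).mpr (dvd_mul_right s t) p
  have hpc : Nat.Coprime p c := by
    have := coprime_sigma_one_prime_pow hp (2 * a)
    rw [hc] at this
    exact this.coprime_mul_left_right
  have hcB : c * p ^ (2 * a - e) ≤ t :=
    Nat.le_of_dvd (Nat.pos_of_ne_zero ht0) ((hpc.pow_left _).symm.mul_dvd_of_dvd_of_dvd hct
      (hfac ▸ Nat.pow_factorization_sub_dvd hs0 ht0))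
  have hc0 : c ≠ 0 := by rintro rfl; simp_all
  have hP : p ^ e + 1 ≤ 2 * c :=
    prime_pow_add_one_le_two_mul hp hp3 (by omega)
      ((Nat.ordProj_dvd s p).trans ⟨2, by omega⟩) hc hc0
  have hPB : p ^ e * p ^ (2 * a - e) = p ^ (2 * a) := by rw [← pow_add]; congr 1; omega
  have hσP : 2 * (q * c) < 3 * (p ^ e * p ^ (2 * a - e)) := by
    rw [hPB, ← hc]; exact two_mul_sigma_one_prime_pow_lt hp hp3 (2 * a)
  have := sq_lt_of_three_mul_sq_le_sq (hn2.trans (by rw [hPB])) hσP hqn hcB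
    (three_mul_sq_lt_four_mul_sq hn0 hst (by omega) hqn)
  nlinarith

lemma sq_lt_three_mul_sq_of_sigma_eq {q n : ℕ} (hq : q.Prime) (hqodd : Odd q) (hn : Odd n)
    (h : (q + 1) * σ 1 (n ^ 2) = 2 * (q * n ^ 2)) : q ^ 2 < 3 * n ^ 2 := by
  have hn0 : n ≠ 0 := hn.pos.ne'
  obtain ⟨s, hs⟩ := hqodd.add_one.two_dvd
  obtain ⟨t, hst, hσ⟩ : ∃ t, n ^ 2 = s * t ∧ σ 1 (n ^ 2) = q * t := by
    refine Nat.exists_eq_mul_and_eq_mul_of_mul_eq_mul (by omega)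
      (Nat.Coprime.coprime_dvd_left ⟨2, by omega⟩ (by simp : Nat.Coprime (q + 1) q)) ?_
    rw [hs, mul_assoc] at h
    exact Nat.eq_of_mul_eq_mul_left two_pos h
  obtain ⟨p, hp, hpn2, hqp⟩ :=
    exists_prime_dvd_of_dvd_sigma_one hq (pow_ne_zero 2 hn0) ⟨t, hσ⟩
  have hp3 : 3 ≤ p := by
    have := Nat.odd_iff.mp (hn.of_dvd_nat (hp.dvd_of_dvd_pow hpn2))
    have := hp.two_le
    omega
  rw [Nat.factorization_pow, Finsupp.smul_apply, smul_eq_mul] at hqp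
  obtain ⟨c, hc⟩ := hqp
  exact sq_lt_three_mul_sq_of_dvd_sigma_one_prime_pow hp hp3
    (Nat.ordProj_mul_ordCompl_eq_self n p).symm (Nat.not_dvd_ordCompl hp hn0) hs hst hσ hc

lemma sq_lt_three_mul_sq_of_two_le {q k n : ℕ} (hq : q.Prime) (hk : 2 ≤ k) (hn : n ≠ 0)
    (h : σ 1 (q ^ k) * σ 1 (n ^ 2) = 2 * (q ^ k * n ^ 2)) : q ^ 2 < 3 * n ^ 2 := by
  have hdvd : σ 1 (q ^ k) ∣ 2 * n ^ 2 :=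
    ((coprime_sigma_one_prime_pow hq k).pow_left k).symm.dvd_of_dvd_mul_right
      ⟨σ 1 (n ^ 2), by rw [h]; ring⟩
  have hn2 : 0 < n ^ 2 := by positivity
  calc q ^ 2 ≤ q ^ k := Nat.pow_le_pow_right hq.pos hk
    _ ≤ σ 1 (q ^ k) := le_sigma_one _
    _ ≤ 2 * n ^ 2 := Nat.le_of_dvd (by positivity) hdvd
    _ < 3 * n ^ 2 := by omega

theorem stmt_9 (N q k n : ℕ) (hodd : Odd N) (hperf : ArithmeticFunction.sigma 1 N = 2 * N)
    (hq : q.Prime) (hq4 : q % 4 = 1) (hk4 : k % 4 = 1)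
    (hgcd : Nat.gcd q n = 1) (hN : N = q ^ k * n ^ 2) :
    (q : ℝ) < n * Real.sqrt 3 := by
  have hn : Odd n := hodd.of_dvd_nat (hN ▸ dvd_mul_of_dvd_right (dvd_pow_self n two_ne_zero) _)
  have hσ : σ 1 (q ^ k) * σ 1 (n ^ 2) = 2 * (q ^ k * n ^ 2) := by
    rw [← isMultiplicative_sigma.map_mul_of_coprime (Nat.Coprime.pow k 2 hgcd), ← hN, hperf]
  have hqn : q ^ 2 < 3 * n ^ 2 := by
    rcases (by omega : k = 1 ∨ 2 ≤ k) with rfl | hk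
    · refine sq_lt_three_mul_sq_of_sigma_eq hq (Nat.odd_iff.mpr (by omega)) hn ?_
      rw [sigma_one_apply_prime_pow hq, sum_range_succ, sum_range_one] at hσ
      simpa [add_comm] using hσ
    · exact sq_lt_three_mul_sq_of_two_le hq hk hn.pos.ne' hσ
  have h3 : ((n : ℝ) * √3) ^ 2 = 3 * n ^ 2 := by
    rw [mul_pow, Real.sq_sqrt (by norm_num)]; ring
  exact lt_of_pow_lt_pow_left₀ 2 (by positivity) (by rw [h3]; exact_mod_cast hqn)
end

section
/- If N = q^k · n² is an odd perfect number given in Eulerian form, then I(q^k) < 2^{1/3} < I(n), where I(m) = σ(m)/m. -/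
/-! Since `q ≡ 1 (mod 4)` is prime, `q ≥ 5`, so `I(q^k) < q/(q-1) ≤ 5/4 < 2^{1/3}`.
The abundancy index is multiplicative on coprime arguments and submultiplicative in general,
hence `I(n)² ≥ I(n²) = 2 / I(q^k) > 8/5`, and `(8/5)³ > 4` gives `I(n) > 2^{1/3}`. -/

open ArithmeticFunction Finset
open scoped ArithmeticFunction.sigma

namespace Nat

theorem sum_divisors_mul_le (m n : ℕ) :
    ∑ d ∈ (m * n).divisors, d ≤ (∑ d ∈ m.divisors, d) * ∑ d ∈ n.divisors, d := by
  rw [sum_mul_sum, ← sum_product', divisors_mul, ← image_mul_product]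
  exact sum_image_le_of_nonneg fun _ _ ↦ Nat.zero_le _

theorem abundancyIndex_nonneg (n : ℕ) : 0 ≤ n.abundancyIndex := by
  unfold abundancyIndex; positivity

theorem abundancyIndex_mul_le (m n : ℕ) :
    (m * n).abundancyIndex ≤ m.abundancyIndex * n.abundancyIndex := by
  rw [abundancyIndex, abundancyIndex, abundancyIndex, _root_.div_mul_div_comm, cast_mul]
  gcongr
  exact_mod_cast sum_divisors_mul_le m n

theorem abundancyIndex_sq_le (n : ℕ) : (n ^ 2).abundancyIndex ≤ n.abundancyIndex ^ 2 := by
  simpa only [sq] using abundancyIndex_mul_le n n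

theorem Coprime.abundancyIndex_mul {m n : ℕ} (h : m.Coprime n) :
    (m * n).abundancyIndex = m.abundancyIndex * n.abundancyIndex := by
  rw [abundancyIndex, abundancyIndex, abundancyIndex, _root_.div_mul_div_comm, h.sum_divisors_mul]
  push_cast
  rfl

theorem Perfect.abundancyIndex_eq_two {n : ℕ} (h : n.Perfect) : n.abundancyIndex = 2 := by
  have hsum := (perfect_iff_sum_divisors_eq_two_mul h.2).1 h
  rw [abundancyIndex, hsum, cast_mul, cast_ofNat, mul_div_cancel_right₀]
  exact_mod_cast h.2.ne'

theorem Prime.abundancyIndex_pow_lt {p : ℕ} (hp : p.Prime) (k : ℕ) :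
    (p ^ k).abundancyIndex < p / (p - 1) := by
  have hp1 : (1 : ℚ) < p := by exact_mod_cast hp.one_lt
  have hgeom : ((∑ d ∈ (p ^ k).divisors, d : ℕ) : ℚ) = (p ^ (k + 1) - 1) / (p - 1) := by
    rw [sum_divisors_prime_pow hp]
    push_cast
    exact geom_sum_eq hp1.ne' _
  rw [abundancyIndex, hgeom, cast_pow, div_div, div_lt_div_iff₀ (by positivity) (by linarith)]
  rw [pow_succ]
  nlinarith

end Nat

namespace Real

theorem rpow_one_third_lt_iff {x y : ℝ} (hx : 0 ≤ x) (hy : 0 ≤ y) :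
    x ^ (1 / 3 : ℝ) < y ↔ x < y ^ 3 := by
  rw [one_div, rpow_inv_lt_iff_of_pos hx hy (by norm_num)]
  norm_cast

theorem lt_rpow_one_third_iff {x y : ℝ} (hx : 0 ≤ x) (hy : 0 ≤ y) :
    x < y ^ (1 / 3 : ℝ) ↔ x ^ 3 < y := by
  rw [one_div, lt_rpow_inv_iff_of_pos hx hy (by norm_num)]
  norm_cast

end Real

theorem sigma_one_div_eq_abundancyIndex (n : ℕ) :
    (σ 1 n : ℝ) / n = (n.abundancyIndex : ℝ) := by
  simp [Nat.abundancyIndex, sigma_one_apply]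

theorem stmt_10_general (N q k n : ℕ) (hodd : Odd N) (hperf : ArithmeticFunction.sigma 1 N = 2 * N)
    (hq : q.Prime) (hq4 : q % 4 = 1)
    (hgcd : Nat.gcd q n = 1) (hN : N = q ^ k * n ^ 2) :
    (ArithmeticFunction.sigma 1 (q ^ k) : ℝ) / (q ^ k : ℕ) < 2 ^ ((1 : ℝ) / 3) ∧
    (2 : ℝ) ^ ((1 : ℝ) / 3) < (ArithmeticFunction.sigma 1 n : ℝ) / n := by
  have hq5 : (5 : ℚ) ≤ q := by have := hq.two_le; norm_cast; omega
  have hN_perfect : N.Perfect :=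
    (Nat.perfect_iff_sum_divisors_eq_two_mul hodd.pos).2 (by rwa [← sigma_one_apply])
  have hsplit : (q ^ k).abundancyIndex * (n ^ 2).abundancyIndex = 2 := by
    rw [← (Nat.Coprime.pow k 2 hgcd).abundancyIndex_mul, ← hN, hN_perfect.abundancyIndex_eq_two]
  have hqk : (q ^ k).abundancyIndex < 5 / 4 := by
    refine (hq.abundancyIndex_pow_lt k).trans_le ?_
    rw [div_le_div_iff₀ (by linarith) (by norm_num)]
    linarith
  have hqk0 := Nat.abundancyIndex_nonneg (q ^ k)
  have hn0 := Nat.abundancyIndex_nonneg n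
  have hn : 8 / 5 < n.abundancyIndex ^ 2 := by
    nlinarith [Nat.abundancyIndex_nonneg (n ^ 2), Nat.abundancyIndex_sq_le n]
  rw [sigma_one_div_eq_abundancyIndex, sigma_one_div_eq_abundancyIndex]
  constructor
  · rw [Real.lt_rpow_one_third_iff (by positivity) (by norm_num)]
    exact_mod_cast (pow_lt_pow_left₀ hqk hqk0 three_ne_zero).trans (by norm_num)
  · rw [Real.rpow_one_third_lt_iff (by norm_num) (by positivity)]
    exact_mod_cast (by nlinarith : (2 : ℚ) < n.abundancyIndex ^ 3)

theorem stmt_10 (N q k n : ℕ) (hodd : Odd N) (hperf : ArithmeticFunction.sigma 1 N = 2 * N)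
    (hq : q.Prime) (hq4 : q % 4 = 1) (hk4 : k % 4 = 1)
    (hgcd : Nat.gcd q n = 1) (hN : N = q ^ k * n ^ 2) :
    (ArithmeticFunction.sigma 1 (q ^ k) : ℝ) / (q ^ k : ℕ) < 2 ^ ((1 : ℝ) / 3) ∧
    (2 : ℝ) ^ ((1 : ℝ) / 3) < (ArithmeticFunction.sigma 1 n : ℝ) / n :=
  stmt_10_general N q k n hodd hperf hq hq4 hgcd hN
end

section
/- If N = q^k · n² is an odd perfect number in Eulerian form and σ(q^k) = σ(n), then n < q^k. -/
/-!
Multiplicativity of `σ` gives `2 q^k n² = σ(q^k) σ(n²)`, and `σ(n²) ≤ σ(n)² = σ(q^k)²`, so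
`2 q^k n² ≤ σ(q^k)³`. Since `q ≥ 5`, `σ(q^k) < q^{k+1}/(q-1) ≤ (5/4) q^k`, hence
`2 n² < (125/64) q^{2k}`, i.e. `n² < q^{2k}`.
-/

open Finset ArithmeticFunction
open scoped ArithmeticFunction.sigma

/-- Every divisor of `m * n` is a product of a divisor of `m` and one of `n`. -/
theorem ArithmeticFunction.sigma_one_mul_le (m n : ℕ) : σ 1 (m * n) ≤ σ 1 m * σ 1 n := by
  rw [sigma_one_apply, sigma_one_apply, sigma_one_apply, Nat.divisors_mul, Finset.mul_def,
    sum_mul_sum, ← sum_product']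
  exact sum_image_le_of_nonneg fun _ _ ↦ Nat.zero_le _

theorem ArithmeticFunction.sigma_one_prime_pow_mul_sub_one {p : ℕ} (hp : p.Prime) (k : ℕ) :
    σ 1 (p ^ k) * (p - 1) = p ^ (k + 1) - 1 := by
  rw [sigma_one_apply_prime_pow hp]
  exact geom_sum_mul_of_one_le hp.one_le _

theorem ArithmeticFunction.four_mul_sigma_one_prime_pow_lt {p : ℕ} (hp : p.Prime) (hp5 : 5 ≤ p)
    (k : ℕ) : 4 * σ 1 (p ^ k) < 5 * p ^ k := by
  have h : σ 1 (p ^ k) * (p - 1) + 1 = p ^ k * p := by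
    rw [sigma_one_prime_pow_mul_sub_one hp, ← pow_succ]
    exact Nat.sub_add_cancel (Nat.one_le_pow _ _ hp.pos)
  refine Nat.lt_of_mul_lt_mul_right (a := p - 1) ?_
  zify [hp.one_le] at h ⊢
  nlinarith [pow_pos hp.pos k]

theorem two_mul_le_sigma_one_pow_three {a b : ℕ} (hab : a.Coprime b)
    (hperf : σ 1 (a * b ^ 2) = 2 * (a * b ^ 2)) (hsig : σ 1 a = σ 1 b) :
    2 * (a * b ^ 2) ≤ σ 1 a ^ 3 :=
  calc 2 * (a * b ^ 2) = σ 1 a * σ 1 (b ^ 2) := by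
        rw [← hperf, isMultiplicative_sigma.map_mul_of_coprime (hab.pow_right 2)]
    _ ≤ σ 1 a * σ 1 a ^ 2 := by
        gcongr
        rw [hsig, sq, sq]
        exact sigma_one_mul_le b b
    _ = σ 1 a ^ 3 := by ring

theorem stmt_13_general (N q k n : ℕ) (hperf : ArithmeticFunction.sigma 1 N = 2 * N)
    (hq : q.Prime) (hq4 : q % 4 = 1)
    (hgcd : Nat.gcd q n = 1) (hN : N = q ^ k * n ^ 2)
    (hsig : ArithmeticFunction.sigma 1 (q ^ k) = ArithmeticFunction.sigma 1 n) :
    n < q ^ k := by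
  subst hN
  have hq5 : 5 ≤ q := by have := hq.two_le; omega
  have hcube := two_mul_le_sigma_one_pow_three (Nat.Coprime.pow_left k hgcd) hperf hsig
  have hbound := four_mul_sigma_one_prime_pow_lt hq hq5 k
  have hmul : q ^ k * (128 * n ^ 2) < q ^ k * (125 * (q ^ k) ^ 2) :=
    calc q ^ k * (128 * n ^ 2) = 64 * (2 * (q ^ k * n ^ 2)) := by ring
      _ ≤ 64 * σ 1 (q ^ k) ^ 3 := by gcongr
      _ = (4 * σ 1 (q ^ k)) ^ 3 := by ring
      _ < (5 * q ^ k) ^ 3 := by gcongr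
      _ = q ^ k * (125 * (q ^ k) ^ 2) := by ring
  have hsq : n ^ 2 < (q ^ k) ^ 2 := by
    have := Nat.lt_of_mul_lt_mul_left hmul
    omega
  exact lt_of_pow_lt_pow_left₀ 2 (Nat.zero_le _) hsq

theorem stmt_13 (N q k n : ℕ) (hodd : Odd N) (hperf : ArithmeticFunction.sigma 1 N = 2 * N)
    (hq : q.Prime) (hq4 : q % 4 = 1) (hk4 : k % 4 = 1)
    (hgcd : Nat.gcd q n = 1) (hN : N = q ^ k * n ^ 2)
    (hsig : ArithmeticFunction.sigma 1 (q ^ k) = ArithmeticFunction.sigma 1 n) :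
    n < q ^ k :=
  stmt_13_general N q k n hperf hq hq4 hgcd hN hsig
end

section
/- If N = q^k · n² is an odd perfect number in Eulerian form with q ≡ 2 (mod 3), then 3 divides n. -/
open ArithmeticFunction Finset
open scoped ArithmeticFunction.sigma

/- For odd `k` the geometric sum `σ(q^k) = 1 + q + ⋯ + q^k` has an even number of
terms, so `q + 1` divides it. As `σ` is multiplicative, `σ(q^k) ∣ σ(N) = 2N`, and `q ≡ 2 (mod 3)`
puts `3` in `q + 1`; hence `3 ∣ N = q^k n²` while `3 ∤ q`, so `3 ∣ n`. -/

theorem add_one_dvd_geom_sum_of_odd {q k : ℕ} (hk : Odd k) :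
    q + 1 ∣ ∑ j ∈ range (k + 1), q ^ j := by
  rw [← ZMod.natCast_eq_zero_iff]
  have hq : (q : ZMod (q + 1)) = -1 :=
    eq_neg_of_add_eq_zero_left (by exact_mod_cast ZMod.natCast_self (q + 1))
  push_cast
  rw [hq, neg_one_geom_sum, if_pos hk.add_one]

theorem add_one_dvd_sigma_one_prime_pow {q k : ℕ} (hq : q.Prime) (hk : Odd k) :
    q + 1 ∣ σ 1 (q ^ k) := by
  rw [sigma_one_apply_prime_pow hq]
  exact add_one_dvd_geom_sum_of_odd hk

theorem sigma_dvd_sigma_mul_of_coprime (i : ℕ) {a b : ℕ} (hab : a.Coprime b) :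
    σ i a ∣ σ i (a * b) := by
  rw [isMultiplicative_sigma.map_mul_of_coprime hab]
  exact dvd_mul_right _ _

theorem stmt_19_general (N q k n : ℕ) (hperf : ArithmeticFunction.sigma 1 N = 2 * N)
    (hq : q.Prime) (hk4 : k % 4 = 1)
    (hgcd : Nat.gcd q n = 1) (hN : N = q ^ k * n ^ 2)
    (hq3 : q % 3 = 2) :
    3 ∣ n := by
  have hk : Odd k := Nat.odd_iff.mpr (by omega)
  have h3q : 3 ∣ q + 1 := by omega
  have h3σ : 3 ∣ σ 1 N := by
    rw [hN]
    exact h3q.trans <| (add_one_dvd_sigma_one_prime_pow hq hk).trans <|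
      sigma_dvd_sigma_mul_of_coprime 1 (Nat.Coprime.pow k 2 hgcd)
  have h3N : 3 ∣ q ^ k * n ^ 2 :=
    hN ▸ Nat.Coprime.dvd_of_dvd_mul_left (by decide) (hperf ▸ h3σ)
  rcases Nat.prime_three.dvd_mul.mp h3N with h | h
  · have := Nat.prime_three.dvd_of_dvd_pow h
    omega
  · exact Nat.prime_three.dvd_of_dvd_pow h

theorem stmt_19 (N q k n : ℕ) (hodd : Odd N) (hperf : ArithmeticFunction.sigma 1 N = 2 * N)
    (hq : q.Prime) (hq4 : q % 4 = 1) (hk4 : k % 4 = 1)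
    (hgcd : Nat.gcd q n = 1) (hN : N = q ^ k * n ^ 2)
    (hq3 : q % 3 = 2) :
    3 ∣ n :=
  stmt_19_general N q k n hperf hq hk4 hgcd hN hq3
end
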